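/- arXiv:2302.07213 — 5 statements merged into one kernel-verified Lean document; each statement's English description precedes it below -/
import Mathlib

section
/- Suppose δ̃ := inf_{e∈E} a_e/b_e < 1. Then δ ≤ δ̃ ≤ δ·lct/(δ + lct − 1), where δ := inf_{e∈E} (a_e − ν_e)/(b_e − ν_e). -/
/-- Pointwise key inequality: if `A ≤ B` then `(A/B)·(r + lct − 1) ≤ r·lct`
where `r = (A−x)/(B−x)`. -/
lemma stmt2_aux (A B x lct : ℝ) (hB : 0 < B) (hxB : x < B)
    (hl : lct * x ≤ A) (hab : A ≤ B) :
    (A / B) * ((A - x) / (B - x) + lct - 1) ≤ (A - x) / (B - x) * lct := by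
  have hBx : 0 < B - x := by linarith
  have h1 : (A / B) * ((A - x) / (B - x) + lct - 1)
      = (A * ((A - x) + (lct - 1) * (B - x))) / (B * (B - x)) := by
    rw [eq_div_iff (by positivity)]
    field_simp
    ring
  have h2 : (A - x) / (B - x) * lct = ((A - x) * lct * B) / (B * (B - x)) := by
    rw [eq_div_iff (by positivity)]
    field_simp
  rw [h1, h2, div_le_div_iff₀ (by positivity) (by positivity)]
  nlinarith [mul_nonneg (sub_nonneg.2 hab) (sub_nonneg.2 hl), mul_pos hB hBx]

/-- If `δ̃ = inf a/b < 1` then `δ ≤ δ̃ ≤ δ·lct/(δ + lct - 1)` where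
`δ = inf (a - ν)/(b - ν)`. -/
theorem stmt2 {E : Type*} [Nonempty E] (a b ν : E → ℝ) (lct : ℝ)
    (ha : ∀ e, 0 < a e) (hb : ∀ e, 0 < b e)
    (hν0 : ∀ e, 0 ≤ ν e) (hνb : ∀ e, ν e < b e)
    (hlct : 1 < lct) (hAlct : ∀ e, lct * ν e ≤ a e)
    (hdelta : (⨅ e, a e / b e) < 1) :
    (⨅ e, (a e - ν e) / (b e - ν e)) ≤ (⨅ e, a e / b e) ∧
    (⨅ e, a e / b e) ≤
      (⨅ e, (a e - ν e) / (b e - ν e)) * lct /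
        ((⨅ e, (a e - ν e) / (b e - ν e)) + lct - 1) := by
  have hTpos : ∀ e, (0:ℝ) ≤ (a e - ν e) / (b e - ν e) := fun e =>
    div_nonneg (by nlinarith [hAlct e, hν0 e]) (by linarith [hνb e])
  have hSpos : ∀ e, (0:ℝ) ≤ a e / b e := fun e => div_nonneg (ha e).le (hb e).le
  have hbddT : BddBelow (Set.range fun e => (a e - ν e) / (b e - ν e)) :=
    ⟨0, by rintro _ ⟨e, rfl⟩; exact hTpos e⟩
  have hbddS : BddBelow (Set.range fun e => a e / b e) :=
    ⟨0, by rintro _ ⟨e, rfl⟩; exact hSpos e⟩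
  have hD0 : (0:ℝ) ≤ ⨅ e, (a e - ν e) / (b e - ν e) := le_ciInf hTpos
  have hS0 : (0:ℝ) ≤ ⨅ e, a e / b e := le_ciInf hSpos
  have key1 : (⨅ e, (a e - ν e) / (b e - ν e)) ≤ ⨅ e, a e / b e := by
    refine le_of_forall_pos_le_add fun ε hε => ?_
    obtain ⟨e, he⟩ : ∃ e, a e / b e < min ((⨅ e, a e / b e) + ε) 1 :=
      exists_lt_of_ciInf_lt (lt_min (by linarith) hdelta)
    have hab : a e < b e := (div_lt_one (hb e)).1 (he.trans_le (min_le_right _ _))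
    have h2 : (a e - ν e) / (b e - ν e) ≤ a e / b e := by
      rw [div_le_div_iff₀ (by linarith [hνb e]) (hb e)]
      nlinarith [mul_nonneg (hν0 e) (sub_nonneg.2 hab.le)]
    calc (⨅ e, (a e - ν e) / (b e - ν e)) ≤ (a e - ν e) / (b e - ν e) :=
          ciInf_le hbddT e
      _ ≤ a e / b e := h2
      _ ≤ (⨅ e, a e / b e) + ε := (he.trans_le (min_le_left _ _)).le
  refine ⟨key1, ?_⟩
  have hD1 : (⨅ e, (a e - ν e) / (b e - ν e)) < 1 := key1.trans_lt hdelta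
  have hden : (0:ℝ) < (⨅ e, (a e - ν e) / (b e - ν e)) + lct - 1 := by linarith
  rw [le_div_iff₀ hden]
  refine le_of_forall_pos_le_add fun η hη => ?_
  set D := ⨅ e, (a e - ν e) / (b e - ν e) with hD
  set ε := min (η / lct) ((1 - D) / 2) with hε
  have hεpos : 0 < ε := lt_min (div_pos hη (by linarith)) (by linarith)
  obtain ⟨e, he⟩ : ∃ e, (a e - ν e) / (b e - ν e) < D + ε :=
    exists_lt_of_ciInf_lt (by linarith)
  have hTe1 : (a e - ν e) / (b e - ν e) < 1 := by
    have h := min_le_right (η / lct) ((1 - D) / 2)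
    calc (a e - ν e) / (b e - ν e) < D + ε := he
      _ ≤ D + (1 - D) / 2 := by rw [hε] at *; linarith
      _ < 1 := by linarith
  have hab : a e ≤ b e := by
    have h := (div_lt_one (by linarith [hνb e] : (0:ℝ) < b e - ν e)).1 hTe1
    linarith
  have hpoint := stmt2_aux (a e) (b e) (ν e) lct (hb e) (hνb e) (hAlct e) hab
  have hSle : (⨅ e, a e / b e) ≤ a e / b e := ciInf_le hbddS e
  have hDle : D ≤ (a e - ν e) / (b e - ν e) := ciInf_le hbddT e
  have hεl : ε * lct ≤ η := by
    have h1 : ε ≤ η / lct := min_le_left _ _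
    calc ε * lct ≤ (η / lct) * lct := by nlinarith
      _ = η := by field_simp
  have hTd : (0:ℝ) ≤ (a e - ν e) / (b e - ν e) + lct - 1 := by
    have := hTpos e; linarith
  calc (⨅ e, a e / b e) * (D + lct - 1)
      ≤ (⨅ e, a e / b e) * ((a e - ν e) / (b e - ν e) + lct - 1) := by
        apply mul_le_mul_of_nonneg_left (by linarith) hS0
    _ ≤ (a e / b e) * ((a e - ν e) / (b e - ν e) + lct - 1) :=
        mul_le_mul_of_nonneg_right hSle hTd
    _ ≤ (a e - ν e) / (b e - ν e) * lct := hpoint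
    _ ≤ (D + ε) * lct := by nlinarith
    _ ≤ D * lct + η := by nlinarith
end

section
/- Suppose δ̃ := inf_{e∈E} a_e/b_e ≥ 1. Then δ ≥ δ̃ ≥ δ·lct/(δ + lct − 1), where δ := inf_{e∈E} (a_e − ν_e)/(b_e − ν_e). -/
/-- If `δ̃ = inf a/b ≥ 1` then `δ ≥ δ̃ ≥ δ·lct/(δ + lct - 1)` where
`δ = inf (a - ν)/(b - ν)`. -/
theorem stmt3 {E : Type*} [Nonempty E] (a b ν : E → ℝ) (lct : ℝ)
    (ha : ∀ e, 0 < a e) (hb : ∀ e, 0 < b e)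
    (hν0 : ∀ e, 0 ≤ ν e) (hνb : ∀ e, ν e < b e)
    (hlct : 1 < lct) (hAlct : ∀ e, lct * ν e ≤ a e)
    (hdelta : 1 ≤ (⨅ e, a e / b e)) :
    (⨅ e, a e / b e) ≤ (⨅ e, (a e - ν e) / (b e - ν e)) ∧
    (⨅ e, (a e - ν e) / (b e - ν e)) * lct /
        ((⨅ e, (a e - ν e) / (b e - ν e)) + lct - 1) ≤ (⨅ e, a e / b e) := by
  have hlct0 : (0:ℝ) < lct := lt_trans one_pos hlct
  have hbν : ∀ e, 0 < b e - ν e := fun e => sub_pos.2 (hνb e)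
  have haν : ∀ e, 0 < a e - ν e := by
    intro e
    nlinarith [hAlct e, hν0 e, ha e, mul_pos (ha e) (sub_pos.2 hlct)]
  have hbdd1 : BddBelow (Set.range fun e => a e / b e) := by
    refine ⟨0, ?_⟩
    rintro x ⟨e, rfl⟩
    exact le_of_lt (div_pos (ha e) (hb e))
  have hbdd2 : BddBelow (Set.range fun e => (a e - ν e) / (b e - ν e)) := by
    refine ⟨0, ?_⟩
    rintro x ⟨e, rfl⟩
    exact le_of_lt (div_pos (haν e) (hbν e))
  have hge1 : ∀ e, b e ≤ a e := by
    intro e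
    have h := hdelta.trans (ciInf_le hbdd1 e)
    rw [le_div_iff₀ (hb e)] at h
    linarith
  have part1 : (⨅ e, a e / b e) ≤ (⨅ e, (a e - ν e) / (b e - ν e)) := by
    refine le_ciInf fun e => le_trans (ciInf_le hbdd1 e) ?_
    rw [div_le_div_iff₀ (hb e) (hbν e)]
    nlinarith [mul_nonneg (hν0 e) (sub_nonneg.2 (hge1 e))]
  refine ⟨part1, ?_⟩
  set D := (⨅ e, (a e - ν e) / (b e - ν e)) with hDdef
  have hD1 : 1 ≤ D := hdelta.trans part1
  have hden : 0 < D + lct - 1 := by linarith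
  refine le_ciInf fun e => ?_
  have hDe : D * (b e - ν e) ≤ a e - ν e :=
    (le_div_iff₀ (hbν e)).1 (ciInf_le hbdd2 e)
  rw [div_le_div_iff₀ hden (hb e)]
  nlinarith [mul_nonneg (sub_nonneg.2 hD1) (sub_nonneg.2 (hAlct e)),
    mul_le_mul_of_nonneg_left hDe (le_of_lt hlct0),
    mul_nonneg (le_of_lt hlct0) (hν0 e)]
end

section
/- Let n ≥ 1 be an integer, τ > 0, and F : [0, τ] → ℝ a nonnegative continuous function with ∫₀^τ F(y) dy > 0, such that F(x₀) ≥ (x₀/x)^{n−1} F(x) whenever 0 < x₀ ≤ x ≤ τ (equivalently, y ↦ F(y)/y^{n−1} is nonincreasing on (0, τ]). Define b := (∫₀^τ y·F(y) dy) / (∫₀^τ F(y) dy). Then b ≤ n·τ/(n+1). -/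
/-!
Put `c = nτ/(n+1)`, the barycenter of the density `y^(n-1)` on `[0, τ]`, so that
`∫₀^τ (c - y) y^(n-1) dy = 0`. The monotonicity of `F(y)/y^(n-1)` says exactly that
`F(y) - (y/c)^(n-1) F(c)` has the sign of `c - y`, hence
`0 ≤ ∫₀^τ (c - y) (F(y) - (y/c)^(n-1) F(c)) dy = c ∫₀^τ F - ∫₀^τ y F`.
-/

open MeasureTheory Set

theorem integral_barycenter_sub_mul_pow (k : ℕ) (τ : ℝ) :
    ∫ y in (0 : ℝ)..τ, ((k + 1) * τ / (k + 2) - y) * y ^ k = 0 := by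
  have hsplit : ∀ y : ℝ, ((k + 1) * τ / (k + 2) - y) * y ^ k
      = (k + 1) * τ / (k + 2) * y ^ k - y ^ (k + 1) := fun y => by ring
  simp only [hsplit]
  rw [intervalIntegral.integral_sub ((by fun_prop : Continuous _).intervalIntegrable _ _)
      ((continuous_pow _).intervalIntegrable _ _),
    intervalIntegral.integral_const_mul, integral_pow, integral_pow]
  push_cast
  field_simp
  ring

section PowRatioAntitone

variable {k : ℕ} {τ : ℝ} {F : ℝ → ℝ}

theorem sub_mul_sub_pow_div_mul_nonneg
    (hdec : ∀ x₀ x : ℝ, 0 < x₀ → x₀ ≤ x → x ≤ τ → (x₀ / x) ^ k * F x ≤ F x₀)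
    {c y : ℝ} (hc : 0 < c) (hcτ : c ≤ τ) (hy : 0 < y) (hyτ : y ≤ τ) :
    0 ≤ (c - y) * (F y - (y / c) ^ k * F c) := by
  rcases le_total y c with hyc | hcy
  · exact mul_nonneg (by linarith) (by linarith [hdec y c hy hyc hcτ])
  · have hFy : F y ≤ (y / c) ^ k * F c := by
      have hcancel : (y / c) ^ k * ((c / y) ^ k * F y) = F y := by
        rw [← mul_assoc, ← mul_pow, div_mul_div_cancel₀' hy.ne', div_self hc.ne', one_pow, one_mul]
      rw [← hcancel]
      exact mul_le_mul_of_nonneg_left (hdec c y hc hcy hyτ) (by positivity)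
    exact mul_nonneg_of_nonpos_of_nonpos (by linarith) (by linarith)

theorem integral_mul_le_barycenter_mul_integral
    (hdec : ∀ x₀ x : ℝ, 0 < x₀ → x₀ ≤ x → x ≤ τ → (x₀ / x) ^ k * F x ≤ F x₀)
    (hτ : 0 < τ) (hF : ContinuousOn F (Icc 0 τ)) :
    ∫ y in (0 : ℝ)..τ, y * F y ≤ (k + 1) * τ / (k + 2) * ∫ y in (0 : ℝ)..τ, F y := by
  set c : ℝ := (k + 1) * τ / (k + 2)
  have hc : 0 < c := by positivity
  have hcτ : c ≤ τ := by
    rw [div_le_iff₀ (by positivity)]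
    linarith
  have hF' : ContinuousOn F (uIcc 0 τ) := by rwa [uIcc_of_le hτ.le]
  have hnonneg : 0 ≤ ∫ y in (0 : ℝ)..τ, (c - y) * (F y - (y / c) ^ k * F c) := by
    rw [intervalIntegral.integral_of_le hτ.le]
    exact setIntegral_nonneg measurableSet_Ioc fun y hy =>
      sub_mul_sub_pow_div_mul_nonneg hdec hc hcτ hy.1 hy.2
  have hexpand : ∀ y : ℝ, (c - y) * (F y - (y / c) ^ k * F c)
      = c * F y - y * F y - F c / c ^ k * ((c - y) * y ^ k) := fun y => by
    rw [div_pow]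
    field_simp
  simp only [hexpand] at hnonneg
  rw [intervalIntegral.integral_sub, intervalIntegral.integral_sub,
    intervalIntegral.integral_const_mul, intervalIntegral.integral_const_mul,
    integral_barycenter_sub_mul_pow] at hnonneg
  · linarith
  all_goals exact ContinuousOn.intervalIntegrable (by fun_prop)

end PowRatioAntitone

theorem stmt5_general (n : ℕ) (hn : 1 ≤ n) (τ : ℝ) (hτ : 0 < τ) (F : ℝ → ℝ)
    (hF : ContinuousOn F (Set.Icc 0 τ))
    (hpos : 0 < ∫ y in (0 : ℝ)..τ, F y)
    (hdec : ∀ x₀ x : ℝ, 0 < x₀ → x₀ ≤ x → x ≤ τ →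
      (x₀ / x) ^ (n - 1) * F x ≤ F x₀) :
    (∫ y in (0 : ℝ)..τ, y * F y) / (∫ y in (0 : ℝ)..τ, F y)
      ≤ n * τ / (n + 1) := by
  obtain ⟨k, rfl⟩ := Nat.exists_eq_add_of_le' hn
  rw [Nat.add_sub_cancel] at hdec
  have hc : ((k + 1 : ℕ) : ℝ) * τ / ((k + 1 : ℕ) + 1) = (k + 1) * τ / (k + 2) := by
    push_cast
    ring
  rw [hc, div_le_iff₀ hpos]
  exact integral_mul_le_barycenter_mul_integral hdec hτ hF

/-- Analytic core of Fujita's inequality: if `F ≥ 0` is continuous on `[0,τ]`,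
`∫₀^τ F > 0`, and `y ↦ F(y)/y^{n-1}` is nonincreasing (i.e.
`F(x₀) ≥ (x₀/x)^{n-1} F(x)` for `0 < x₀ ≤ x ≤ τ`), then
`b = (∫₀^τ y F(y) dy)/(∫₀^τ F(y) dy) ≤ nτ/(n+1)`. -/
theorem stmt5 (n : ℕ) (hn : 1 ≤ n) (τ : ℝ) (hτ : 0 < τ) (F : ℝ → ℝ)
    (hF : ContinuousOn F (Set.Icc 0 τ))
    (hF0 : ∀ y ∈ Set.Icc (0 : ℝ) τ, 0 ≤ F y)
    (hpos : 0 < ∫ y in (0 : ℝ)..τ, F y)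
    (hdec : ∀ x₀ x : ℝ, 0 < x₀ → x₀ ≤ x → x ≤ τ →
      (x₀ / x) ^ (n - 1) * F x ≤ F x₀) :
    (∫ y in (0 : ℝ)..τ, y * F y) / (∫ y in (0 : ℝ)..τ, F y)
      ≤ n * τ / (n + 1) :=
  stmt5_general n hn τ hτ F hF hpos hdec
end

section
/- Let n be a natural number and let G, V : [0,1] → ℝ be Lipschitz functions with G(t) > 0 and V(t) > 0 for all t, such that for all 0 ≤ s ≤ t ≤ 1 one has G(t) ≥ G(s)·(n + 1 − n·V(s)/V(t)). Then G(1) ≥ G(0)·(V(1)/V(0))^n. -/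
/-!
Put `F = G / V ^ n` and `r = V s / V t`. The hypothesis gives
`F t ≥ F s * r ^ n * (n + 1 - n r)`, and by Bernoulli `r ^ n * (n + 1 - n r) ≥ 1 - n² (1 - r)²`:
the factor is stationary at `r = 1`. As `V` is Lipschitz and bounded below, `|1 - r| = O(t - s)`,
so `F` loses at most a factor `1 - C (t - s)²` on `[s, t]`. Along a partition of `[0, 1]` into
`N` pieces these factors multiply to `(1 - C / N²) ^ N → 1`, hence `F 0 ≤ F 1`.
-/

open Filter Topology Set

theorem one_sub_sq_le_pow_mul (n : ℕ) {r : ℝ} (hr : 0 ≤ r) (h : n * |1 - r| ≤ 1) :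
    1 - (n * (1 - r)) ^ 2 ≤ r ^ n * (n + 1 - n * r) := by
  have bernoulli : 1 - n * (1 - r) ≤ r ^ n := by
    have := one_add_mul_le_pow (show (-2 : ℝ) ≤ r - 1 by linarith) n
    rw [add_sub_cancel] at this
    linarith
  have hpos : 0 ≤ 1 + n * (1 - r) := by
    have := neg_abs_le (1 - r)
    nlinarith [(n.cast_nonneg : (0 : ℝ) ≤ n)]
  calc 1 - (n * (1 - r)) ^ 2 = (1 - n * (1 - r)) * (1 + n * (1 - r)) := by ring
    _ ≤ r ^ n * (1 + n * (1 - r)) := mul_le_mul_of_nonneg_right bernoulli hpos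
    _ = r ^ n * (n + 1 - n * r) := by ring

theorem exists_abs_one_sub_div_le_of_lipschitzOnWith {α : Type*} [PseudoMetricSpace α]
    {V : α → ℝ} {K : NNReal} {S : Set α} (hS : IsCompact S) (hV : LipschitzOnWith K V S)
    (hpos : ∀ x ∈ S, 0 < V x) :
    ∃ L, 0 ≤ L ∧ ∀ x ∈ S, ∀ y ∈ S, |1 - V x / V y| ≤ L * dist x y := by
  obtain ⟨m, hm, hmV⟩ := hS.exists_forall_le' hV.continuousOn hpos
  refine ⟨K / m, by positivity, fun x hx y hy => ?_⟩
  have hVy : 0 < V y := hpos y hy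
  calc |1 - V x / V y| = dist (V y) (V x) / V y := by
        rw [Real.dist_eq, one_sub_div hVy.ne', abs_div, abs_of_pos hVy]
    _ ≤ K * dist y x / m := div_le_div₀ (by positivity) (hV.dist_le_mul y hy x hx) hm (hmV y hy)
    _ = K / m * dist x y := by rw [dist_comm]; ring

theorem mul_pow_le_of_mul_le_succ {x : ℕ → ℝ} {q : ℝ} (hq : 0 ≤ q) {N : ℕ}
    (hx : ∀ i < N, x i * q ≤ x (i + 1)) : ∀ i ≤ N, x 0 * q ^ i ≤ x i := by
  intro i hi
  induction i with
  | zero => simp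
  | succ i ih =>
    calc x 0 * q ^ (i + 1) = x 0 * q ^ i * q := by ring
      _ ≤ x i * q := mul_le_mul_of_nonneg_right (ih (by omega)) hq
      _ ≤ x (i + 1) := hx i (by omega)

theorem tendsto_one_sub_mul_inv_sq_pow {C : ℝ} (hC : 0 ≤ C) :
    Tendsto (fun N : ℕ => (1 - C * ((N : ℝ)⁻¹) ^ 2) ^ N) atTop (𝓝 1) := by
  have hinv : Tendsto (fun N : ℕ => (N : ℝ)⁻¹) atTop (𝓝 0) := tendsto_inv_atTop_nhds_zero_nat
  have hlower : Tendsto (fun N : ℕ => 1 - C * (N : ℝ)⁻¹) atTop (𝓝 1) := by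
    simpa using (hinv.const_mul C).const_sub 1
  have hsmall : ∀ᶠ N : ℕ in atTop, C * ((N : ℝ)⁻¹) ^ 2 ≤ 1 := by
    have := (hinv.pow 2).const_mul C
    rw [zero_pow two_ne_zero, mul_zero] at this
    exact this.eventually (ge_mem_nhds zero_lt_one)
  refine tendsto_of_tendsto_of_tendsto_of_le_of_le' hlower tendsto_const_nhds ?_ ?_
  · filter_upwards [hsmall] with N hN
    have bernoulli := one_add_mul_le_pow (show (-2 : ℝ) ≤ -(C * ((N : ℝ)⁻¹) ^ 2) by linarith) N
    have hN : (N : ℝ) * (N : ℝ)⁻¹ ^ 2 = (N : ℝ)⁻¹ := by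
      rcases N.eq_zero_or_pos with rfl | hN
      · simp
      · field_simp
    calc 1 - C * (N : ℝ)⁻¹ = 1 + N * -(C * ((N : ℝ)⁻¹) ^ 2) := by linear_combination C * hN
      _ ≤ _ := bernoulli
      _ = _ := by ring
  · filter_upwards [hsmall] with N hN
    exact pow_le_one₀ (by linarith) (by nlinarith [sq_nonneg ((N : ℝ)⁻¹)])

theorem le_of_mul_one_sub_sq_le {F : ℝ → ℝ} {C δ : ℝ} (hC : 0 ≤ C) (hδ : 0 < δ)
    (hF : ∀ s t, 0 ≤ s → s ≤ t → t ≤ 1 → t - s ≤ δ → F s * (1 - C * (t - s) ^ 2) ≤ F t) :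
    F 0 ≤ F 1 := by
  have hinv : Tendsto (fun N : ℕ => (N : ℝ)⁻¹) atTop (𝓝 0) := tendsto_inv_atTop_nhds_zero_nat
  have hsmall : ∀ᶠ N : ℕ in atTop, 0 < N ∧ (N : ℝ)⁻¹ ≤ δ ∧ C * ((N : ℝ)⁻¹) ^ 2 ≤ 1 := by
    have hsq := (hinv.pow 2).const_mul C
    rw [zero_pow two_ne_zero, mul_zero] at hsq
    filter_upwards [eventually_gt_atTop 0, hinv.eventually (ge_mem_nhds hδ),
      hsq.eventually (ge_mem_nhds zero_lt_one)] with N h0 h1 h2 using ⟨h0, h1, h2⟩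
  have hlim : Tendsto (fun N : ℕ => F 0 * (1 - C * ((N : ℝ)⁻¹) ^ 2) ^ N) atTop (𝓝 (F 0)) := by
    simpa using (tendsto_one_sub_mul_inv_sq_pow hC).const_mul (F 0)
  refine le_of_tendsto hlim ?_
  filter_upwards [hsmall] with N ⟨hN, hNδ, hNC⟩
  have hstep : ∀ i < N, F (i / N) * (1 - C * ((N : ℝ)⁻¹) ^ 2) ≤ F ((i + 1 : ℕ) / N) := by
    intro i hi
    have hdiff : ((i + 1 : ℕ) : ℝ) / N - i / N = (N : ℝ)⁻¹ := by
      push_cast; field_simp; ring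
    have hle : ((i + 1 : ℕ) : ℝ) / N ≤ 1 := div_le_one_of_le₀ (by exact_mod_cast hi) N.cast_nonneg
    have hNinv : (0 : ℝ) < (N : ℝ)⁻¹ := by positivity
    have := hF _ _ (by positivity) (by linarith) hle (hdiff ▸ hNδ)
    rwa [hdiff] at this
  simpa [hN.ne'] using
    mul_pow_le_of_mul_le_succ (x := fun i : ℕ => F (i / N)) (by linarith) hstep N le_rfl

theorem div_pow_mul_one_sub_sq_le (n : ℕ) {Gs Gt Vs Vt c : ℝ} (hGs : 0 ≤ Gs) (hVs : 0 < Vs)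
    (hVt : 0 < Vt) (hstep : Gs * (n + 1 - n * Vs / Vt) ≤ Gt) (hratio : n * |1 - Vs / Vt| ≤ c)
    (hc : c ≤ 1) :
    Gs / Vs ^ n * (1 - c ^ 2) ≤ Gt / Vt ^ n := by
  have hsq : (n * (1 - Vs / Vt)) ^ 2 ≤ c ^ 2 := by
    rw [← sq_abs, abs_mul, Nat.abs_cast]
    exact pow_le_pow_left₀ (by positivity) hratio 2
  calc Gs / Vs ^ n * (1 - c ^ 2)
      ≤ Gs / Vs ^ n * ((Vs / Vt) ^ n * (n + 1 - n * (Vs / Vt))) := by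
        refine mul_le_mul_of_nonneg_left ?_ (by positivity)
        linarith [one_sub_sq_le_pow_mul n (by positivity) (hratio.trans hc)]
    _ = Gs * (n + 1 - n * Vs / Vt) / Vt ^ n := by rw [div_pow]; field_simp
    _ ≤ Gt / Vt ^ n := div_le_div_of_nonneg_right hstep (by positivity)

theorem stmt9_general (n : ℕ) (G V : ℝ → ℝ)
    (hV : ∃ K, LipschitzOnWith K V (Set.Icc 0 1))
    (hGpos : ∀ t ∈ Set.Icc (0 : ℝ) 1, 0 < G t)
    (hVpos : ∀ t ∈ Set.Icc (0 : ℝ) 1, 0 < V t)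
    (h : ∀ s t : ℝ, 0 ≤ s → s ≤ t → t ≤ 1 →
      G s * ((n : ℝ) + 1 - n * V s / V t) ≤ G t) :
    G 0 * (V 1 / V 0) ^ n ≤ G 1 := by
  obtain ⟨K, hK⟩ := hV
  obtain ⟨L, hL, hratio⟩ := exists_abs_one_sub_div_le_of_lipschitzOnWith isCompact_Icc hK hVpos
  have hmono : G 0 / V 0 ^ n ≤ G 1 / V 1 ^ n := by
    refine le_of_mul_one_sub_sq_le (F := fun t => G t / V t ^ n) (C := (n * L) ^ 2)
      (δ := 1 / (n * L + 1)) (by positivity) (by positivity) fun s t hs hst ht hδ => ?_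
    have hs' : s ∈ Icc (0 : ℝ) 1 := ⟨hs, hst.trans ht⟩
    have ht' : t ∈ Icc (0 : ℝ) 1 := ⟨hs.trans hst, ht⟩
    have hst' : n * |1 - V s / V t| ≤ n * L * (t - s) := by
      have := hratio s hs' t ht'
      rw [Real.dist_eq, abs_sub_comm s t, abs_of_nonneg (sub_nonneg.2 hst)] at this
      rw [mul_assoc]
      exact mul_le_mul_of_nonneg_left this n.cast_nonneg
    rw [le_div_iff₀ (by positivity)] at hδ
    simpa only [mul_pow] using div_pow_mul_one_sub_sq_le n (hGpos s hs').le (hVpos s hs')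
      (hVpos t ht') (h s t hs hst ht) hst' (by nlinarith [sub_nonneg.2 hst])
  have hV1 : 0 < V 1 ^ n := pow_pos (hVpos 1 ⟨zero_le_one, le_rfl⟩) n
  calc G 0 * (V 1 / V 0) ^ n = G 0 / V 0 ^ n * V 1 ^ n := by rw [div_pow]; ring
    _ ≤ G 1 / V 1 ^ n * V 1 ^ n := mul_le_mul_of_nonneg_right hmono hV1.le
    _ = G 1 := div_mul_cancel₀ _ hV1.ne'

/-- Differential-inequality argument: if `G, V` are Lipschitz and positive on
`[0,1]` and `G(t) ≥ G(s)·(n + 1 - n·V(s)/V(t))` for `0 ≤ s ≤ t ≤ 1`, then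
`G(1) ≥ G(0)·(V(1)/V(0))^n`. -/
theorem stmt9 (n : ℕ) (G V : ℝ → ℝ)
    (hG : ∃ K, LipschitzOnWith K G (Set.Icc 0 1))
    (hV : ∃ K, LipschitzOnWith K V (Set.Icc 0 1))
    (hGpos : ∀ t ∈ Set.Icc (0 : ℝ) 1, 0 < G t)
    (hVpos : ∀ t ∈ Set.Icc (0 : ℝ) 1, 0 < V t)
    (h : ∀ s t : ℝ, 0 ≤ s → s ≤ t → t ≤ 1 →
      G s * ((n : ℝ) + 1 - n * V s / V t) ≤ G t) :
    G 0 * (V 1 / V 0) ^ n ≤ G 1 :=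
  stmt9_general n G V hV hGpos hVpos h
end

section
/- Let (X, μ) be a finite measure space, (I, ≤) a nonempty directed set, and (ψ_i)_{i∈I} a family of measurable functions X → [−∞, 0] such that ψ_j ≤ ψ_i pointwise whenever i ≤ j, and such that B := sup_{i∈I} ∫_X (−ψ_i) dμ < ∞. Then there exists a nondecreasing sequence (i_k)_{k∈ℕ} in I such that (ψ_{i_k}) converges pointwise nonincreasingly to a measurable function ψ̃ with ∫_X (−ψ̃) dμ = B, and for every j ∈ I one has ψ̃ ≤ ψ_j μ-almost everywhere. -/
/-- The nonnegative part of an extended real, as an element of `[0,∞]`. -/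
noncomputable def erealToENNReal (x : EReal) : ENNReal :=
  if x = ⊤ then ⊤ else ENNReal.ofReal x.toReal

lemma erealToENNReal_coe_ennreal (a : ENNReal) :
    erealToENNReal ((a : EReal)) = a := by
  unfold erealToENNReal
  rcases eq_or_ne a ⊤ with rfl | ha
  · simp [EReal.coe_ennreal_top]
  · rw [if_neg (by simp [EReal.coe_ennreal_eq_top_iff, ha]),
      EReal.toReal_coe_ennreal, ENNReal.ofReal_toReal ha]

lemma coe_erealToENNReal {x : EReal} (hx : 0 ≤ x) :
    ((erealToENNReal x : ENNReal) : EReal) = x := by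
  unfold erealToENNReal
  rcases eq_or_ne x ⊤ with rfl | hxt
  · simp [EReal.coe_ennreal_top]
  · rw [if_neg hxt, EReal.coe_ennreal_ofReal]
    have hxb : x ≠ ⊥ := fun h => by simp [h] at hx
    have h0 : (0 : ℝ) ≤ x.toReal := by
      rcases EReal.lt_iff_exists_real_btwn.1 (lt_of_le_of_ne (le_top) hxt) with _
      induction x using EReal.rec with
      | bot => exact absurd rfl hxb
      | coe r => simpa [EReal.toReal_coe] using EReal.coe_le_coe_iff.1 (by simpa using hx)
      | top => exact absurd rfl hxt
    rw [max_eq_left h0, EReal.coe_toReal hxt hxb]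

lemma erealToENNReal_le_erealToENNReal {x y : EReal} (hx : 0 ≤ x) (hxy : x ≤ y) :
    erealToENNReal x ≤ erealToENNReal y := by
  rw [← EReal.coe_ennreal_le_coe_ennreal_iff,
    coe_erealToENNReal hx, coe_erealToENNReal (hx.trans hxy)]
  exact hxy

lemma measurable_erealToENNReal : Measurable erealToENNReal := by
  unfold erealToENNReal
  refine Measurable.ite (MeasurableSet.singleton ⊤) measurable_const ?_
  exact ENNReal.measurable_ofReal.comp measurable_ereal_toReal

open MeasureTheory Filter in
/-- A directed antitone family of measurable functions `X → [-∞,0]` with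
uniformly bounded `L¹` norms admits a nondecreasing sequence of indices along
which the functions decrease pointwise to a measurable limit `ψ̃` whose `L¹`
norm realizes the supremum `B`, and `ψ̃ ≤ ψ_j` a.e. for every `j`. -/
theorem stmt13 {X : Type*} [MeasurableSpace X] (μ : Measure X)
    [IsFiniteMeasure μ] {I : Type*} [Preorder I] [Nonempty I]
    [IsDirected I (· ≤ ·)]
    (ψ : I → X → EReal) (hmeas : ∀ i, Measurable (ψ i))
    (hle : ∀ i x, ψ i x ≤ 0)
    (hanti : ∀ i j, i ≤ j → ∀ x, ψ j x ≤ ψ i x)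
    (B : ENNReal) (hB : B = ⨆ i, ∫⁻ x, erealToENNReal (-(ψ i x)) ∂μ)
    (hBfin : B < ⊤) :
    ∃ (idx : ℕ → I) (ψt : X → EReal), Monotone idx ∧ Measurable ψt ∧
      (∀ x, Antitone fun k => ψ (idx k) x) ∧
      (∀ x, Filter.Tendsto (fun k => ψ (idx k) x) Filter.atTop (nhds (ψt x))) ∧
      (∫⁻ x, erealToENNReal (-(ψt x)) ∂μ) = B ∧
      (∀ j, ∀ᵐ x ∂μ, ψt x ≤ ψ j x) := by
  classical
  set F : I → ENNReal := fun i => ∫⁻ x, erealToENNReal (-(ψ i x)) ∂μ with hF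
  have hneg_nonneg : ∀ i x, (0 : EReal) ≤ -(ψ i x) := fun i x => by
    simpa using EReal.neg_le_neg_iff.2 (hle i x)
  -- φ : the ENNReal-valued versions
  set φ : I → X → ENNReal := fun i x => erealToENNReal (-(ψ i x)) with hφ
  have hφmeas : ∀ i, Measurable (φ i) := fun i =>
    measurable_erealToENNReal.comp (hmeas i).neg
  have hφcoe : ∀ i x, ((φ i x : EReal)) = -(ψ i x) := fun i x =>
    coe_erealToENNReal (hneg_nonneg i x)
  have hφmono : ∀ i j, i ≤ j → ∀ x, φ i x ≤ φ j x := fun i j hij x =>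
    erealToENNReal_le_erealToENNReal (hneg_nonneg i x)
      (EReal.neg_le_neg_iff.2 (hanti i j hij x))
  -- choose approximating sequence
  have hexists : ∀ n : ℕ, ∃ i : I, B ≤ F i + ((n : ENNReal) + 1)⁻¹ := by
    intro n
    rcases le_or_gt B (((n : ENNReal) + 1)⁻¹ : ENNReal) with h | h
    · exact ⟨Classical.arbitrary I, h.trans (le_add_self)⟩
    · have hlt : B - (((n : ENNReal) + 1)⁻¹ : ENNReal) < B :=
        ENNReal.sub_lt_self hBfin.ne (fun h0 => by simp [h0] at h)
          (by simp)
      rw [hB] at hlt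
      obtain ⟨i, hi⟩ := lt_iSup_iff.1 hlt
      exact ⟨i, tsub_le_iff_right.1 (le_of_lt (hB ▸ hi))⟩
  choose j hj using hexists
  -- build monotone idx with idx n ≥ j n
  have hdir : ∀ a b : I, ∃ c, a ≤ c ∧ b ≤ c := fun a b => directed_of (· ≤ ·) a b
  choose ub hub1 hub2 using hdir
  let idx : ℕ → I := fun n => Nat.rec (j 0) (fun n p => ub p (j (n + 1))) n
  have hidx_succ : ∀ n, idx n ≤ idx (n + 1) := fun n => hub1 _ _
  have hidx_mono : Monotone idx := monotone_nat_of_le_succ hidx_succ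
  have hidx_ge : ∀ n, j n ≤ idx n := by
    intro n; cases n with
    | zero => exact le_refl _
    | succ n => exact hub2 _ _
  -- the limit function
  set Φ : X → ENNReal := fun x => ⨆ k, φ (idx k) x with hΦ
  have hΦmeas : Measurable Φ := Measurable.iSup fun k => hφmeas (idx k)
  set ψt : X → EReal := fun x => -((Φ x : EReal)) with hψt
  have hψtmeas : Measurable ψt := hΦmeas.coe_ereal_ennreal.neg
  have hφk_mono : ∀ x, Monotone fun k => φ (idx k) x := fun x k l hkl =>
    hφmono _ _ (hidx_mono hkl) x
  have hanti' : ∀ x, Antitone fun k => ψ (idx k) x := fun x k l hkl =>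
    hanti _ _ (hidx_mono hkl) x
  -- tendsto
  have htendφ : ∀ x, Tendsto (fun k => φ (idx k) x) atTop (nhds (Φ x)) := fun x =>
    tendsto_atTop_iSup (hφk_mono x)
  have htend : ∀ x, Tendsto (fun k => ψ (idx k) x) atTop (nhds (ψt x)) := by
    intro x
    have : Tendsto (fun k => -((φ (idx k) x : EReal))) atTop (nhds (ψt x)) :=
      ((continuous_neg.comp continuous_coe_ennreal_ereal).tendsto _).comp (htendφ x)
    refine this.congr fun k => ?_
    rw [hφcoe]; simp
  -- erealToENNReal (-(ψt x)) = Φ x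
  have hψtφ : ∀ x, erealToENNReal (-(ψt x)) = Φ x := by
    intro x
    rw [hψt]; simp only [neg_neg]
    exact erealToENNReal_coe_ennreal _
  have hFidx : ∀ n, F (j n) ≤ F (idx n) := by
    intro n
    exact lintegral_mono fun x => hφmono _ _ (hidx_ge n) x
  -- the integral of Φ
  have hintΦ : ∫⁻ x, Φ x ∂μ = ⨆ k, F (idx k) := by
    rw [hΦ]
    exact lintegral_iSup (fun k => hφmeas (idx k)) (fun k l hkl x => hφk_mono x hkl)
  have hsup_le : (⨆ k, F (idx k)) ≤ B := by
    rw [hB]; exact iSup_le fun k => le_iSup (fun i => F i) (idx k)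
  have hle_sup : B ≤ ⨆ k, F (idx k) := by
    refine ENNReal.le_of_forall_pos_le_add fun ε hε hS => ?_
    obtain ⟨n, hn⟩ := ENNReal.exists_inv_nat_lt (a := (ε : ENNReal)) (by simpa using hε.ne')
    calc B ≤ F (j n) + ((n : ENNReal) + 1)⁻¹ := hj n
    _ ≤ (⨆ k, F (idx k)) + ε := by
        refine add_le_add ((hFidx n).trans (le_iSup (fun k => F (idx k)) n)) ?_
        refine le_trans (ENNReal.inv_le_inv' (by simp)) hn.le
  have hintB : ∫⁻ x, erealToENNReal (-(ψt x)) ∂μ = B := by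
    simp only [hψtφ]
    rw [hintΦ]
    exact le_antisymm hsup_le hle_sup
  refine ⟨idx, ψt, hidx_mono, hψtmeas, hanti', htend, hintB, ?_⟩
  -- a.e. comparison
  intro i0
  -- the max function
  have key : ∫⁻ x, (Φ x ⊔ φ i0 x) ∂μ ≤ B := by
    have hsupmax : ∀ x, Φ x ⊔ φ i0 x = ⨆ k, (φ (idx k) x ⊔ φ i0 x) := by
      intro x
      rw [hΦ, iSup_sup]
    have : ∫⁻ x, (Φ x ⊔ φ i0 x) ∂μ = ⨆ k, ∫⁻ x, (φ (idx k) x ⊔ φ i0 x) ∂μ := by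
      simp only [hsupmax]
      exact lintegral_iSup (fun k => (hφmeas (idx k)).sup (hφmeas i0))
        (fun k l hkl x => sup_le_sup_right (hφk_mono x hkl) _)
    rw [this]
    refine iSup_le fun k => ?_
    obtain ⟨m, hm1, hm2⟩ := directed_of (· ≤ ·) (idx k) i0
    calc ∫⁻ x, (φ (idx k) x ⊔ φ i0 x) ∂μ
        ≤ ∫⁻ x, φ m x ∂μ := by
          refine lintegral_mono fun x => sup_le (hφmono _ _ hm1 x) (hφmono _ _ hm2 x)
    _ = F m := rfl
    _ ≤ B := hB ▸ le_iSup (fun i => F i) m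
  have hΦint : ∫⁻ x, Φ x ∂μ = B := by
    rw [hintΦ]; exact le_antisymm hsup_le hle_sup
  have hae : Φ =ᵐ[μ] fun x => Φ x ⊔ φ i0 x := by
    refine ae_eq_of_ae_le_of_lintegral_le (ae_of_all μ fun x => le_sup_left)
      (by rw [hΦint]; exact hBfin.ne) (hΦmeas.sup (hφmeas i0)).aemeasurable ?_
    rw [hΦint]; exact key
  filter_upwards [hae] with x hx
  have hφle : φ i0 x ≤ Φ x := by
    by_contra h
    push_neg at h
    have : Φ x ⊔ φ i0 x = φ i0 x := sup_eq_right.2 h.le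
    rw [this] at hx
    exact absurd hx.symm.le (not_le.2 h)
  have : ((φ i0 x : EReal)) ≤ ((Φ x : EReal)) :=
    EReal.coe_ennreal_le_coe_ennreal_iff.2 hφle
  rw [hφcoe] at this
  rw [hψt]
  calc -((Φ x : EReal)) ≤ -(-(ψ i0 x)) := EReal.neg_le_neg_iff.2 this
  _ = ψ i0 x := by simp
end
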